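/- If a rational map R of degree d has all its d+1 fixed points simple (the fixed point polynomial zQ(z) - P(z) has d+1 distinct roots ζ₁,…,ζ_{d+1} in ℂ and R does not fix ∞), then the holomorphic indices ι(R, ζₖ) = 1/(1 - R'(ζₖ)) sum to 1: Σₖ 1/(1 - R'(ζₖ)) = 1. -/

import Mathlib

open Polynomial Finset

/-!
At a fixed point `ζ` of `R = P/Q` one has `1 - R'(ζ) = F'(ζ)/Q(ζ)` for `F = XQ - P`, so the index
`1/(1 - R'(ζ))` is `Q(ζ)/F'(ζ)`. Since `F` is the nodal polynomial of its `d+1` distinct roots and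
`deg Q < d + 1`, Lagrange interpolation gives `∑ Q(ζₖ)/F'(ζₖ) = [X^d] Q = 1`.
-/

namespace Lagrange

variable {F ι : Type*} [Field F] [DecidableEq ι] {s : Finset ι} {v : ι → F}

theorem coeff_basis_card_sub_one {i : ι} (hi : i ∈ s) :
    (Lagrange.basis s v i).coeff (#s - 1) = nodalWeight s v i := by
  have hmonic : (nodal (s.erase i) v).Monic := nodal_monic
  have hdeg : (nodal (s.erase i) v).natDegree = #s - 1 := by
    rw [natDegree_nodal, card_erase_of_mem hi]
  rw [basis_eq_prod_sub_inv_mul_nodal_div hi, ← nodal_erase_eq_nodal_div hi, coeff_C_mul, ← hdeg,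
    hmonic.coeff_natDegree, mul_one]

theorem coeff_card_sub_one_eq_sum_nodalWeight_mul (hvs : Set.InjOn v s) {f : F[X]}
    (hf : f.degree < #s) : f.coeff (#s - 1) = ∑ i ∈ s, nodalWeight s v i * f.eval (v i) := by
  conv_lhs => rw [eq_interpolate hvs hf, interpolate_apply, finsetSum_coeff]
  exact sum_congr rfl fun i hi => by rw [coeff_C_mul, coeff_basis_card_sub_one hi, mul_comm]

theorem sum_eval_div_eval_derivative_nodal (hvs : Set.InjOn v s) {f : F[X]}
    (hf : f.degree < #s) :
    ∑ i ∈ s, f.eval (v i) / (derivative (nodal s v)).eval (v i) = f.coeff (#s - 1) := by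
  rw [coeff_card_sub_one_eq_sum_nodalWeight_mul hvs hf]
  exact sum_congr rfl fun i hi => by rw [nodalWeight_eq_eval_derivative_nodal hi, div_eq_inv_mul]

end Lagrange

theorem one_sub_eval_quotient_derivative_of_fixedPt {K : Type*} [Field K] {P Q : K[X]} {z : K}
    (hfix : z * Q.eval z = P.eval z) (hQz : Q.eval z ≠ 0) :
    1 - ((derivative P).eval z * Q.eval z - P.eval z * (derivative Q).eval z) / Q.eval z ^ 2 =
      (derivative (X * Q - P)).eval z / Q.eval z := by
  simp only [derivative_sub, derivative_mul, derivative_X, one_mul, eval_sub, eval_add, eval_mul,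
    eval_X]
  rw [← hfix]
  field_simp
  ring

theorem eval_ne_zero_of_isCoprime_of_mul_eval_eq {K : Type*} [Field K] {P Q : K[X]} {z : K}
    (hPQ : IsCoprime P Q) (hfix : z * Q.eval z = P.eval z) : Q.eval z ≠ 0 := by
  intro hQz
  rcases aeval_ne_zero_of_isCoprime hPQ z with hP | hQ
  · exact hP (by rw [coe_aeval_eq_eval, ← hfix, hQz, mul_zero])
  · exact hQ (by rwa [coe_aeval_eq_eval])

theorem fatou_index_formula_general (d : ℕ) (P Q : Polynomial ℂ) (hQ : Q.Monic)
    (hQd : Q.natDegree = d) (hcop : IsCoprime P Q)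
    (ζ : Fin (d + 1) → ℂ) (hζ : Function.Injective ζ)
    (hfix : X * Q - P = ∏ k, (X - C (ζ k)))
    (m : ℂ → ℂ)
    (hm : ∀ z : ℂ, m z =
      ((derivative P).eval z * Q.eval z - P.eval z * (derivative Q).eval z) / (Q.eval z) ^ 2) :
    ∑ k, 1 / (1 - m (ζ k)) = 1 := by
  have hnodal : X * Q - P = Lagrange.nodal univ ζ := hfix
  have hfixed (k : Fin (d + 1)) : ζ k * Q.eval (ζ k) = P.eval (ζ k) := by
    have hroot := Lagrange.eval_nodal_at_node (v := ζ) (mem_univ k)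
    rw [← hnodal, eval_sub, eval_mul, eval_X] at hroot
    exact sub_eq_zero.mp hroot
  have hdeg : Q.degree < #(univ : Finset (Fin (d + 1))) := by
    rw [card_univ, Fintype.card_fin, degree_eq_natDegree hQ.ne_zero, hQd]
    exact_mod_cast d.lt_succ_self
  calc ∑ k, 1 / (1 - m (ζ k))
      = ∑ k, Q.eval (ζ k) / (derivative (Lagrange.nodal univ ζ)).eval (ζ k) := by
        refine sum_congr rfl fun k _ => ?_
        rw [hm, one_sub_eval_quotient_derivative_of_fixedPt (hfixed k)
          (eval_ne_zero_of_isCoprime_of_mul_eval_eq hcop (hfixed k)), one_div_div, hnodal]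
    _ = Q.coeff d := by
        rw [Lagrange.sum_eval_div_eval_derivative_nodal hζ.injOn hdeg, card_univ, Fintype.card_fin,
          Nat.add_sub_cancel]
    _ = 1 := hQd ▸ hQ.coeff_natDegree

/-- Rational Fatou index formula: if all `d+1` fixed points of a degree-`d` rational map
`R = P/Q` are simple (the fixed point polynomial `zQ - P` has `d+1` distinct roots `ζₖ`),
then the holomorphic indices `1/(1 - R'(ζₖ))` sum to 1. -/
theorem fatou_index_formula (d : ℕ) (hd : 2 ≤ d) (P Q : Polynomial ℂ) (hQ : Q.Monic)
    (hQd : Q.natDegree = d) (hPd : P.natDegree ≤ d) (hcop : IsCoprime P Q)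
    (ζ : Fin (d + 1) → ℂ) (hζ : Function.Injective ζ)
    (hfix : X * Q - P = ∏ k, (X - C (ζ k)))
    (m : ℂ → ℂ)
    (hm : ∀ z : ℂ, m z =
      ((derivative P).eval z * Q.eval z - P.eval z * (derivative Q).eval z) / (Q.eval z) ^ 2) :
    ∑ k, 1 / (1 - m (ζ k)) = 1 :=
  fatou_index_formula_general d P Q hQ hQd hcop ζ hζ hfix m hm
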